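/- arXiv:2504.04308 — 2 statements merged into one kernel-verified Lean document; each statement's English description precedes it below -/
import Mathlib

section
/- Suppose W_k = [[P_k, 0],[0ᵀ, 0]] and W_q = [[P_q, 0],[0ᵀ, 0]] in (d+1)×(d+1) block form with P_k, P_q ∈ ℝ^{d×d}, and W_vᵀ = [0_{(d+1)×d} u] for some u ∈ ℝ^{d+1} (so that v_i = y_i·u for i ∈ {1,…,n} and v_{n+1} = 0). Then for every h ∈ ℝ^{d+1}, hᵀ o_{n+1} = xᵀ P_q ((X P_k) ⊙ Ω̄)ᵀ y, where Ω̄ = Σ_{m=1}^{d+1} h_m u_m · Ω^m ∈ ℝ^{n×d} and Ω^m ∈ ℝ^{n×d} is the matrix whose i-th row is (g^m_{i:n+1})ᵀ for i ∈ {1,…,n}. -/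
open Matrix Finset

/-- GLA state recursion (0-indexed tokens): `glaState G v k 0 = 0` and
`glaState G v k (t+1) = G t ⊙ glaState G v k t + v t (k t)ᵀ`, so that token `i`
of the paper (for `i ∈ {1, …, n+1}`) corresponds to index `i - 1` here. -/
noncomputable def glaState {d : ℕ}
    (G : ℕ → Matrix (Fin (d + 1)) (Fin (d + 1)) ℝ)
    (v k : ℕ → (Fin (d + 1) → ℝ)) : ℕ → Matrix (Fin (d + 1)) (Fin (d + 1)) ℝ
  | 0 => 0
  | t + 1 => (G t).hadamard (glaState G v k t) + vecMulVec (v t) (k t)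

lemma glaState_apply {d : ℕ} (G : ℕ → Matrix (Fin (d+1)) (Fin (d+1)) ℝ)
    (v k : ℕ → Fin (d+1) → ℝ) (N : ℕ) (m b : Fin (d+1)) :
    glaState G v k N m b
      = ∑ i ∈ Finset.range N, (∏ t ∈ Finset.Ico (i+1) N, G t m b) * (v i m * k i b) := by
  induction N with
  | zero => simp [glaState]
  | succ N ih =>
    rw [Finset.sum_range_succ]
    have : glaState G v k (N+1) m b = G N m b * glaState G v k N m b + v N m * k N b := by
      simp [glaState, Matrix.hadamard, Matrix.add_apply, vecMulVec]
    rw [this, ih, Finset.mul_sum]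
    congr 1
    · apply Finset.sum_congr rfl
      intro i hi
      rw [Finset.mem_range] at hi
      rw [Finset.prod_Ico_succ_top (by omega : i + 1 ≤ N)]
      ring
    · simp


lemma esym_castSucc {d : ℕ} (a : Fin d) :
    finSumFinEquiv.symm (a.castSucc : Fin (d+1)) = Sum.inl a := by
  rw [Equiv.symm_apply_eq]; rfl

lemma esym_last (d : ℕ) : finSumFinEquiv.symm (Fin.last d) = Sum.inr (0 : Fin 1) := by
  rw [Equiv.symm_apply_eq]
  simp [finSumFinEquiv]
  ext; simp

lemma endgame {I J K M : Type*} [Fintype I] [Fintype J] [Fintype K] [Fintype M]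
    (h u : M → ℝ) (Om : M → I → J → ℝ) (yv : I → ℝ) (A : I → J → ℝ)
    (xq : K → ℝ) (Pq : K → J → ℝ) :
    ∑ m, h m * ∑ j, (∑ i, Om m i j * (u m * yv i * A i j)) * (∑ a, xq a * Pq a j)
    = ∑ a, xq a * ∑ j, Pq a j * ∑ i, A i j * (∑ m, h m * u m * Om m i j) * yv i := by
  simp only [Finset.mul_sum, Finset.sum_mul]
  conv_lhs => rw [Finset.sum_comm]
  conv_lhs => enter [2, j]; rw [Finset.sum_comm]
  conv_lhs => enter [2, j, 2, k]; rw [Finset.sum_comm]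
  conv_lhs => rw [Finset.sum_comm]
  exact Finset.sum_congr rfl fun k _ => Finset.sum_congr rfl fun j _ =>
    Finset.sum_congr rfl fun i _ => Finset.sum_congr rfl fun m _ => by ring


/-- With `W_k, W_q` as in the block construction and
`W_vᵀ = [0_{(d+1)×d} u]`, for every `h ∈ ℝ^{d+1}`,
`hᵀ o_{n+1} = xᵀ P_q ((X P_k) ⊙ Ω̄)ᵀ y` where
`Ω̄ = Σ_m h_m u_m Ω^m` and row `i` of `Ω^m` is `(g^m_{i:n+1})ᵀ`. -/
theorem stmt2 (n d : ℕ) (hn : 0 < n) (hd : 0 < d)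
    (x : Fin n → Fin d → ℝ) (yv : Fin n → ℝ) (xq : Fin d → ℝ)
    (Pk Pq : Matrix (Fin d) (Fin d) ℝ) (u : Fin (d + 1) → ℝ)
    (Wk Wq Wv : Matrix (Fin (d + 1)) (Fin (d + 1)) ℝ)
    (hWk : Wk = Matrix.reindex finSumFinEquiv finSumFinEquiv
      (Matrix.fromBlocks Pk 0 0 (0 : Matrix (Fin 1) (Fin 1) ℝ)))
    (hWq : Wq = Matrix.reindex finSumFinEquiv finSumFinEquiv
      (Matrix.fromBlocks Pq 0 0 (0 : Matrix (Fin 1) (Fin 1) ℝ)))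
    -- `W_vᵀ = [0_{(d+1)×d}  u]`: the first `d` columns of `W_vᵀ` vanish and its
    -- last column is `u`
    (hWv : ∀ a : Fin (d + 1), (∀ b : Fin d, Wvᵀ a b.castSucc = 0) ∧ Wvᵀ a (Fin.last d) = u a)
    -- the gating matrices `G_1, …, G_{n+1}`, with `G i` being the paper's `G_{i+1}`
    (G : ℕ → Matrix (Fin (d + 1)) (Fin (d + 1)) ℝ)
    -- the tokens `z_1, …, z_{n+1}`, with `z i` being the paper's `z_{i+1}`
    (z : ℕ → (Fin (d + 1) → ℝ))
    (hz : ∀ i : Fin n, z i = Fin.snoc (x i) (yv i))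
    (hzq : z n = Fin.snoc xq 0)
    -- `Ω^m ∈ ℝ^{n×d}`: the paper's row `i` of `Ω^m` is `(g^m_{i:n+1})ᵀ`, where
    -- `g^m_{i:n+1} = g^m_{i+1} ⊙ ⋯ ⊙ g^m_{n+1}` and `g^m_j` consists of the first
    -- `d` entries of the `m`-th row of `G_j`
    (Ωm : Fin (d + 1) → Matrix (Fin n) (Fin d) ℝ)
    (hΩm : ∀ (m : Fin (d + 1)) (i : Fin n) (j : Fin d),
      Ωm m i j = ∏ t ∈ Finset.Icc ((i : ℕ) + 1) n, G t m j.castSucc)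
    -- the output `o_{n+1}`
    (o : Fin (d + 1) → ℝ)
    (ho : o = glaState G (fun t => Wvᵀ *ᵥ z t) (fun t => Wkᵀ *ᵥ z t) (n + 1)
      *ᵥ (Wqᵀ *ᵥ z n))
    (h : Fin (d + 1) → ℝ)
    (Ωbar : Matrix (Fin n) (Fin d) ℝ)
    (hΩbar : Ωbar = ∑ m : Fin (d + 1), (h m * u m) • Ωm m) :
    h ⬝ᵥ o = xq ⬝ᵥ (Pq *ᵥ (((Matrix.of x * Pk).hadamard Ωbar)ᵀ *ᵥ yv)) := by
  have hWk_cc : ∀ (a b : Fin d), Wk a.castSucc b.castSucc = Pk a b := by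
    intro a b
    simp [hWk, Matrix.reindex_apply, Matrix.submatrix_apply, esym_castSucc]
  have hWk_last_row : ∀ b : Fin (d+1), Wk (Fin.last d) b = 0 := by
    intro b
    simp only [hWk, Matrix.reindex_apply, Matrix.submatrix_apply, esym_last]
    rcases finSumFinEquiv.symm b with b' | b' <;> simp
  have hWq_cc : ∀ (a b : Fin d), Wq a.castSucc b.castSucc = Pq a b := by
    intro a b
    simp [hWq, Matrix.reindex_apply, Matrix.submatrix_apply, esym_castSucc]
  have hWq_last_col : ∀ a : Fin (d+1), Wq a (Fin.last d) = 0 := by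
    intro a
    simp only [hWq, Matrix.reindex_apply, Matrix.submatrix_apply, esym_last]
    rcases finSumFinEquiv.symm a with a' | a' <;> simp
  have hWq_last_row : ∀ b : Fin (d+1), Wq (Fin.last d) b = 0 := by
    intro b
    simp only [hWq, Matrix.reindex_apply, Matrix.submatrix_apply, esym_last]
    rcases finSumFinEquiv.symm b with b' | b' <;> simp
  -- q facts
  have hq_last : (Wqᵀ *ᵥ z n) (Fin.last d) = 0 := by
    simp [Matrix.mulVec, dotProduct, Matrix.transpose_apply, hWq_last_col]
  have hq : ∀ j : Fin d, (Wqᵀ *ᵥ z n) j.castSucc = ∑ a, xq a * Pq a j := by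
    intro j
    simp only [Matrix.mulVec, dotProduct, Matrix.transpose_apply]
    rw [Fin.sum_univ_castSucc]
    simp [hzq, hWq_cc, hWq_last_row, mul_comm]
  -- k facts
  have hk : ∀ (i : Fin n) (j : Fin d),
      (Wkᵀ *ᵥ z i) j.castSucc = ∑ a, x i a * Pk a j := by
    intro i j
    simp only [Matrix.mulVec, dotProduct, Matrix.transpose_apply]
    rw [Fin.sum_univ_castSucc]
    simp [hz i, hWk_cc, hWk_last_row, mul_comm]
  -- v facts
  have hv : ∀ (i : Fin n) (m : Fin (d+1)), (Wvᵀ *ᵥ z i) m = u m * yv i := by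
    intro i m
    have h1 : ∀ b : Fin d, Wv b.castSucc m = 0 := fun b => (hWv m).1 b
    have h2 : Wv (Fin.last d) m = u m := (hWv m).2
    simp only [Matrix.mulVec, dotProduct, Matrix.transpose_apply]
    rw [Fin.sum_univ_castSucc]
    simp [hz i, h1, h2]
  have hvn : ∀ m : Fin (d+1), (Wvᵀ *ᵥ z n) m = 0 := by
    intro m
    have h1 : ∀ b : Fin d, Wv b.castSucc m = 0 := fun b => (hWv m).1 b
    simp only [Matrix.mulVec, dotProduct, Matrix.transpose_apply]
    rw [Fin.sum_univ_castSucc]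
    simp [hzq, h1]
  have LHS : h ⬝ᵥ o = ∑ m : Fin (d+1), h m *
      ∑ j : Fin d, (∑ i : Fin n, Ωm m i j * (u m * yv i * (∑ a, x i a * Pk a j)))
          * (∑ a, xq a * Pq a j) := by
    subst ho
    have step : h ⬝ᵥ (glaState G (fun t => Wvᵀ *ᵥ z t) (fun t => Wkᵀ *ᵥ z t) (n + 1)
        *ᵥ (Wqᵀ *ᵥ z n))
        = ∑ m : Fin (d+1), h m * ∑ b : Fin (d+1),
            glaState G (fun t => Wvᵀ *ᵥ z t) (fun t => Wkᵀ *ᵥ z t) (n + 1) m b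
              * (Wqᵀ *ᵥ z n) b := rfl
    rw [step]
    apply Finset.sum_congr rfl; intro m _
    congr 1
    rw [Fin.sum_univ_castSucc, hq_last, mul_zero, add_zero]
    apply Finset.sum_congr rfl; intro j _
    rw [hq j]
    congr 1
    rw [glaState_apply, Finset.sum_range_succ, hvn, zero_mul, mul_zero, add_zero,
      Finset.sum_range]
    apply Finset.sum_congr rfl; intro i _
    rw [Finset.Ico_add_one_right_eq_Icc, ← hΩm, hv, hk]
  have RHS : xq ⬝ᵥ (Pq *ᵥ (((Matrix.of x * Pk).hadamard Ωbar)ᵀ *ᵥ yv))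
      = ∑ a : Fin d, xq a * ∑ j : Fin d, Pq a j *
        ∑ i : Fin n, (∑ a', x i a' * Pk a' j)
          * (∑ m : Fin (d+1), h m * u m * Ωm m i j) * yv i := by
    simp only [dotProduct, Matrix.mulVec, Matrix.transpose_apply,
      Matrix.hadamard_apply, Matrix.mul_apply, Matrix.of_apply, hΩbar,
      Matrix.sum_apply, Matrix.smul_apply, smul_eq_mul]
  rw [LHS, RHS]
  exact endgame h u (fun m i j => Ωm m i j) yv (fun i j => ∑ a, x i a * Pk a j) xq
    (fun a j => Pq a j)
end

section
/- Assume additionally that a_i = 0 whenever λ_i = 0, and that Δ_Σ · Δ_R < M + s_min. Then the function γ ↦ h₁(h₂(γ)) + 1 admits a unique fixed point on [1, ∞): there exists exactly one γ* ≥ 1 with h₁(h₂(γ*)) + 1 = γ*. -/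
/-
Both h₁ and h₂ are weighted means `γ ↦ Σ vᵢ wᵢ (1 + tᵢ γ)⁻² / Σ wᵢ (1 + tᵢ γ)⁻²` of fixed
values `vᵢ` with nonnegative weights: for h₁ take `wᵢ = aᵢ²`, `vᵢ = tᵢ = λᵢ`; for h₂ take
`wᵢ = sᵢ² (M + sᵢ) / M²`, `vᵢ = sᵢ / (M + sᵢ)`, `tᵢ = sᵢ / M`. Symmetrising the cross
difference of such a mean over pairs `(i, j)` shows that it is Lipschitz on `[0, ∞)` with
constant `max |(vᵢ - vⱼ)(tᵢ - tⱼ)|`, which is at most `Δ_R²` for h₁ and `(Δ_Σ / (M + s_min))²`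
for h₂. So `γ ↦ h₁(h₂(γ)) + 1` is a contraction of `[1, ∞)` with constant
`(Δ_Σ Δ_R / (M + s_min))² < 1`, and Banach's fixed point theorem applies.
-/

open Finset

/-- `h₁(γ̄) = (Σᵢ λᵢ aᵢ²/(1+λᵢγ̄)²) · (Σᵢ aᵢ²/(1+λᵢγ̄)²)⁻¹`. -/
noncomputable def h1 {n : ℕ} (lam a : Fin n → ℝ) (γ : ℝ) : ℝ :=
  (∑ i, lam i * a i ^ 2 / (1 + lam i * γ) ^ 2) * (∑ i, a i ^ 2 / (1 + lam i * γ) ^ 2)⁻¹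

/-- `h₂(γ) = (1 + M·(Σᵢ sᵢ²/(M+sᵢγ)²)·(Σᵢ sᵢ³/(M+sᵢγ)²)⁻¹)⁻¹`. -/
noncomputable def h2 {d : ℕ} (s : Fin d → ℝ) (M γ : ℝ) : ℝ :=
  (1 + M * (∑ i, s i ^ 2 / (M + s i * γ) ^ 2) * (∑ i, s i ^ 3 / (M + s i * γ) ^ 2)⁻¹)⁻¹

open Set
open scoped NNReal

theorem existsUnique_fixedPoint_of_lipschitzOnWith {α : Type*} [MetricSpace α] {s : Set α}
    (hsc : IsComplete s) (hs : s.Nonempty) {f : α → α} (hsf : MapsTo f s s) {K : ℝ≥0}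
    (hK : K < 1) (hf : LipschitzOnWith K f s) : ∃! x, x ∈ s ∧ f x = x := by
  have hc : ContractingWith K (hsf.restrict f s s) := ⟨hK, hf.mapsToRestrict hsf⟩
  obtain ⟨x₀, hx₀⟩ := hs
  obtain ⟨x, hxs, hfx, -⟩ := hc.exists_fixedPoint' hsc hsf hx₀ (edist_ne_top _ _)
  refine ⟨x, ⟨hxs, hfx⟩, fun y ⟨hys, hfy⟩ => ?_⟩
  exact congrArg Subtype.val
    (hc.fixedPoint_unique' (x := ⟨y, hys⟩) (y := ⟨x, hxs⟩) (Subtype.ext hfy) (Subtype.ext hfx))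

theorem abs_inv_sq_sub_inv_sq_le {p q : ℝ} (hp : 1 ≤ p) (hq : 1 ≤ q) :
    |(p ^ 2)⁻¹ - (q ^ 2)⁻¹| ≤ |q - p| * ((p ^ 2)⁻¹ + (q ^ 2)⁻¹) := by
  have hdiff : (p ^ 2)⁻¹ - (q ^ 2)⁻¹ = (q - p) * ((p + q) / (p ^ 2 * q ^ 2)) := by
    field_simp
    ring
  have hsum : (p ^ 2)⁻¹ + (q ^ 2)⁻¹ = (p ^ 2 + q ^ 2) / (p ^ 2 * q ^ 2) := by
    field_simp
    ring
  have hnonneg : 0 ≤ (p + q) / (p ^ 2 * q ^ 2) := div_nonneg (by linarith) (by positivity)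
  rw [hdiff, hsum, abs_mul, abs_of_nonneg hnonneg]
  gcongr <;> nlinarith

theorem two_mul_sum_mul_sum_sub_sum_mul_sum {ι : Type*} [Fintype ι] (v f g : ι → ℝ) :
    2 * ((∑ i, v i * f i) * ∑ j, g j - (∑ i, v i * g i) * ∑ j, f j) =
      ∑ i, ∑ j, (v i - v j) * (f i * g j - g i * f j) := by
  have hswap : ∑ i, ∑ j, v j * (f i * g j - g i * f j) =
      -∑ i, ∑ j, v i * (f i * g j - g i * f j) := by
    rw [sum_comm, ← sum_neg_distrib]
    refine sum_congr rfl fun i _ => ?_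
    rw [← sum_neg_distrib]
    exact sum_congr rfl fun j _ => by ring
  have hexpand : (∑ i, v i * f i) * ∑ j, g j - (∑ i, v i * g i) * ∑ j, f j =
      ∑ i, ∑ j, v i * (f i * g j - g i * f j) := by
    simp only [sum_mul_sum, ← sum_sub_distrib]
    exact sum_congr rfl fun i _ => sum_congr rfl fun j _ => by ring
  simp only [sub_mul, sum_sub_distrib]
  rw [hswap, hexpand]
  ring

theorem abs_sum_mul_sum_sub_sum_mul_sum_le {ι : Type*} [Fintype ι] {v f g : ι → ℝ} {c : ℝ}
    (hpair : ∀ i j, |(v i - v j) * (f i * g j - g i * f j)| ≤ c * (f i * g j + g i * f j)) :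
    |(∑ i, v i * f i) * ∑ j, g j - (∑ i, v i * g i) * ∑ j, f j| ≤ c * ((∑ i, f i) * ∑ j, g j) := by
  have hsum : ∑ i, ∑ j, (f i * g j + g i * f j) = 2 * ((∑ i, f i) * ∑ j, g j) := by
    rw [two_mul]
    simp only [sum_add_distrib, sum_mul_sum]
    rw [sum_comm (f := fun i j => g i * f j)]
    simp only [mul_comm]
  suffices 2 * |(∑ i, v i * f i) * ∑ j, g j - (∑ i, v i * g i) * ∑ j, f j| ≤
      2 * (c * ((∑ i, f i) * ∑ j, g j)) by linarith
  calc 2 * |(∑ i, v i * f i) * ∑ j, g j - (∑ i, v i * g i) * ∑ j, f j|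
      = |∑ i, ∑ j, (v i - v j) * (f i * g j - g i * f j)| := by
        rw [← two_mul_sum_mul_sum_sub_sum_mul_sum, abs_mul, abs_two]
    _ ≤ ∑ i, ∑ j, |(v i - v j) * (f i * g j - g i * f j)| :=
        (abs_sum_le_sum_abs _ _).trans (sum_le_sum fun i _ => abs_sum_le_sum_abs _ _)
    _ ≤ ∑ i, ∑ j, c * (f i * g j + g i * f j) :=
        sum_le_sum fun i _ => sum_le_sum fun j _ => hpair i j
    _ = 2 * (c * ((∑ i, f i) * ∑ j, g j)) := by
        simp only [← mul_sum, hsum]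
        ring

theorem abs_mul_div_sq_sub_mul_div_sq_le {wi wj ti tj x y : ℝ} (hwi : 0 ≤ wi) (hwj : 0 ≤ wj)
    (hti : 0 ≤ ti) (htj : 0 ≤ tj) (hx : 0 ≤ x) (hy : 0 ≤ y) :
    |wi / (1 + ti * x) ^ 2 * (wj / (1 + tj * y) ^ 2) -
        wi / (1 + ti * y) ^ 2 * (wj / (1 + tj * x) ^ 2)| ≤
      |ti - tj| * |x - y| *
        (wi / (1 + ti * x) ^ 2 * (wj / (1 + tj * y) ^ 2) +
          wi / (1 + ti * y) ^ 2 * (wj / (1 + tj * x) ^ 2)) := by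
  set p := (1 + ti * x) * (1 + tj * y)
  set q := (1 + ti * y) * (1 + tj * x)
  have hp : 1 ≤ p := one_le_mul_of_one_le_of_one_le (by nlinarith) (by nlinarith)
  have hq : 1 ≤ q := one_le_mul_of_one_le_of_one_le (by nlinarith) (by nlinarith)
  have hwp : wi / (1 + ti * x) ^ 2 * (wj / (1 + tj * y) ^ 2) = wi * wj * (p ^ 2)⁻¹ := by
    simp only [p, mul_pow]
    field_simp
  have hwq : wi / (1 + ti * y) ^ 2 * (wj / (1 + tj * x) ^ 2) = wi * wj * (q ^ 2)⁻¹ := by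
    simp only [q, mul_pow]
    field_simp
  have hqp : |q - p| = |ti - tj| * |x - y| := by
    rw [← abs_mul, ← abs_neg]
    congr 1
    ring
  rw [hwp, hwq, ← mul_sub, ← mul_add, abs_mul, abs_of_nonneg (mul_nonneg hwi hwj), ← hqp]
  calc wi * wj * |(p ^ 2)⁻¹ - (q ^ 2)⁻¹| ≤ wi * wj * (|q - p| * ((p ^ 2)⁻¹ + (q ^ 2)⁻¹)) := by
        gcongr
        exact abs_inv_sq_sub_inv_sq_le hp hq
    _ = |q - p| * (wi * wj * ((p ^ 2)⁻¹ + (q ^ 2)⁻¹)) := by ring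

section WeightedMean

variable {ι : Type*} [Fintype ι] (w t v : ι → ℝ)

noncomputable def weightedMean (x : ℝ) : ℝ :=
  (∑ i, v i * (w i / (1 + t i * x) ^ 2)) / ∑ i, w i / (1 + t i * x) ^ 2

variable {w t v}

theorem weightedMean_nonneg (hw : ∀ i, 0 ≤ w i) (hv : ∀ i, 0 ≤ v i) (x : ℝ) :
    0 ≤ weightedMean w t v x :=
  div_nonneg (sum_nonneg fun i _ => mul_nonneg (hv i) (div_nonneg (hw i) (sq_nonneg _)))
    (sum_nonneg fun i _ => div_nonneg (hw i) (sq_nonneg _))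

theorem lipschitzOnWith_weightedMean (hw : ∀ i, 0 ≤ w i) (hw₀ : ∃ i, w i ≠ 0)
    (ht : ∀ i, 0 ≤ t i) {C : ℝ}
    (hC : ∀ i j, w i ≠ 0 → w j ≠ 0 → |(v i - v j) * (t i - t j)| ≤ C) :
    LipschitzOnWith C.toNNReal (weightedMean w t v) (Ici 0) := by
  refine LipschitzOnWith.of_dist_le' fun x (hx : 0 ≤ x) y (hy : 0 ≤ y) => ?_
  set g : ι → ℝ → ℝ := fun i z => w i / (1 + t i * z) ^ 2
  have hg : ∀ i z, 0 ≤ g i z := fun i z => div_nonneg (hw i) (sq_nonneg _)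
  have hD : ∀ z, 0 ≤ z → 0 < ∑ i, g i z := by
    obtain ⟨i₀, hi₀⟩ := hw₀
    intro z hz
    have := mul_nonneg (ht i₀) hz
    exact sum_pos' (fun i _ => hg i z)
      ⟨i₀, mem_univ _, div_pos ((hw i₀).lt_of_ne' hi₀) (by positivity)⟩
  have hpair : ∀ i j, |(v i - v j) * (g i x * g j y - g i y * g j x)| ≤
      C * |x - y| * (g i x * g j y + g i y * g j x) := by
    intro i j
    by_cases hij : w i = 0 ∨ w j = 0
    · rcases hij with h | h <;> simp [g, h]
    rw [not_or] at hij
    calc |(v i - v j) * (g i x * g j y - g i y * g j x)|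
        ≤ |v i - v j| * (|t i - t j| * |x - y| * (g i x * g j y + g i y * g j x)) := by
          rw [abs_mul]
          gcongr
          exact abs_mul_div_sq_sub_mul_div_sq_le (hw i) (hw j) (ht i) (ht j) hx hy
      _ = |(v i - v j) * (t i - t j)| * |x - y| * (g i x * g j y + g i y * g j x) := by
          rw [abs_mul]
          ring
      _ ≤ C * |x - y| * (g i x * g j y + g i y * g j x) :=
          mul_le_mul_of_nonneg_right (by gcongr; exact hC i j hij.1 hij.2)
            (add_nonneg (mul_nonneg (hg i x) (hg j y)) (mul_nonneg (hg i y) (hg j x)))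
  have hDxy := mul_pos (hD x hx) (hD y hy)
  change |(∑ i, v i * g i x) / (∑ i, g i x) - (∑ i, v i * g i y) / ∑ i, g i y| ≤ C * |x - y|
  rw [div_sub_div _ _ (hD x hx).ne' (hD y hy).ne', abs_div, abs_of_pos hDxy, div_le_iff₀ hDxy,
    mul_comm (∑ i, g i x) (∑ i, v i * g i y)]
  exact abs_sum_mul_sum_sub_sum_mul_sum_le (f := fun i => g i x) (g := fun i => g i y) hpair

end WeightedMean

theorem h1_eq_weightedMean {n : ℕ} (lam a : Fin n → ℝ) :
    h1 lam a = weightedMean (a ^ 2) lam lam := by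
  funext γ
  rw [h1, weightedMean, div_eq_mul_inv]
  simp only [Pi.pow_apply, mul_div_assoc]

theorem h1_nonneg {n : ℕ} {lam : Fin n → ℝ} (hlam : ∀ i, 0 ≤ lam i) (a : Fin n → ℝ) (γ : ℝ) :
    0 ≤ h1 lam a γ := by
  rw [h1_eq_weightedMean]
  exact weightedMean_nonneg (fun i => sq_nonneg (a i)) hlam γ

theorem lipschitzOnWith_h1 {n : ℕ} {lam a : Fin n → ℝ} (hlam : ∀ i, 0 ≤ lam i)
    (ha : ∃ i, a i ≠ 0) {lmin lmax : ℝ} (hlam_mem : ∀ i, a i ≠ 0 → lam i ∈ Icc lmin lmax) :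
    LipschitzOnWith ((lmax - lmin) ^ 2).toNNReal (h1 lam a) (Ici 0) := by
  rw [h1_eq_weightedMean]
  refine lipschitzOnWith_weightedMean (fun i => sq_nonneg (a i))
    (ha.imp fun i => pow_ne_zero 2) hlam fun i j hi hj => ?_
  have hij := Real.dist_le_of_mem_Icc (hlam_mem i (by simpa using hi))
    (hlam_mem j (by simpa using hj))
  rw [Real.dist_eq] at hij
  rw [abs_mul, ← sq]
  exact pow_le_pow_left₀ (abs_nonneg _) hij 2

theorem h2_eq_weightedMean {d : ℕ} [Nonempty (Fin d)] {s : Fin d → ℝ} (hs : ∀ i, 0 < s i)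
    {M : ℝ} (hM : 0 < M) {γ : ℝ} (hγ : 0 ≤ γ) :
    h2 s M γ = weightedMean (fun i => s i ^ 2 * (M + s i) / M ^ 2) (fun i => s i / M)
      (fun i => s i / (M + s i)) γ := by
  have hden : ∀ i, 0 < M + s i * γ := fun i => by have := hs i; positivity
  have hweight : ∀ i, s i ^ 2 * (M + s i) / M ^ 2 / (1 + s i / M * γ) ^ 2 =
      M * (s i ^ 2 / (M + s i * γ) ^ 2) + s i ^ 3 / (M + s i * γ) ^ 2 := fun i => by
    have := (hden i).ne'
    field_simp
  have hnum : ∀ i, s i / (M + s i) *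
      (M * (s i ^ 2 / (M + s i * γ) ^ 2) + s i ^ 3 / (M + s i * γ) ^ 2) =
      s i ^ 3 / (M + s i * γ) ^ 2 := fun i => by
    have := (hden i).ne'
    have : M + s i ≠ 0 := by have := hs i; positivity
    field_simp
  have hB : 0 < ∑ i, s i ^ 3 / (M + s i * γ) ^ 2 :=
    sum_pos (fun i _ => by have := hs i; have := hden i; positivity) univ_nonempty
  have hA : 0 ≤ ∑ i, s i ^ 2 / (M + s i * γ) ^ 2 := sum_nonneg fun i _ => by positivity
  simp only [h2, weightedMean, hweight, hnum, sum_add_distrib, ← mul_sum]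
  generalize ∑ i, s i ^ 2 / (M + s i * γ) ^ 2 = A at hA ⊢
  generalize ∑ i, s i ^ 3 / (M + s i * γ) ^ 2 = B at hB ⊢
  field_simp
  ring

theorem abs_sub_div_add_mul_sub_div_le {M smin smax x y : ℝ} (hM : 0 < M) (hsmin : 0 ≤ smin)
    (hx : x ∈ Icc smin smax) (hy : y ∈ Icc smin smax) :
    |(x / (M + x) - y / (M + y)) * (x / M - y / M)| ≤ ((smax - smin) / (M + smin)) ^ 2 := by
  have hMx : 0 < M + x := by linarith [hx.1]
  have hMy : 0 < M + y := by linarith [hy.1]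
  have hsq : (x / (M + x) - y / (M + y)) * (x / M - y / M) = (x - y) ^ 2 / ((M + x) * (M + y)) := by
    field_simp
    ring
  have hxy := Real.dist_le_of_mem_Icc hx hy
  rw [Real.dist_eq] at hxy
  rw [hsq, abs_of_nonneg (by positivity), div_pow]
  apply div_le_div₀ (sq_nonneg _) ?_ (by positivity) ?_
  · rw [← sq_abs]
    exact pow_le_pow_left₀ (abs_nonneg _) hxy 2
  · rw [sq]
    exact mul_le_mul (by linarith [hx.1]) (by linarith [hy.1]) (by positivity) hMx.le

theorem h2_nonneg {d : ℕ} [Nonempty (Fin d)] {s : Fin d → ℝ} (hs : ∀ i, 0 < s i)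
    {M : ℝ} (hM : 0 < M) {γ : ℝ} (hγ : 0 ≤ γ) : 0 ≤ h2 s M γ := by
  rw [h2_eq_weightedMean hs hM hγ]
  exact weightedMean_nonneg (fun i => by have := hs i; positivity)
    (fun i => by have := hs i; positivity) γ

theorem lipschitzOnWith_h2 {d : ℕ} [Nonempty (Fin d)] {s : Fin d → ℝ} {M smin smax : ℝ}
    (hM : 0 < M) (hsmin : 0 < smin) (hs_mem : ∀ i, s i ∈ Icc smin smax) :
    LipschitzOnWith (((smax - smin) / (M + smin)) ^ 2).toNNReal (h2 s M) (Ici 0) := by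
  have hs : ∀ i, 0 < s i := fun i => hsmin.trans_le (hs_mem i).1
  have hmean := lipschitzOnWith_weightedMean (w := fun i => s i ^ 2 * (M + s i) / M ^ 2)
    (t := fun i => s i / M) (v := fun i => s i / (M + s i))
    (fun i => by have := hs i; positivity)
    ⟨Classical.arbitrary _, by have := hs (Classical.arbitrary _); positivity⟩
    (fun i => by have := hs i; positivity)
    fun i j _ _ => abs_sub_div_add_mul_sub_div_le hM hsmin.le (hs_mem i) (hs_mem j)
  intro x hx y hy
  rw [h2_eq_weightedMean hs hM hx, h2_eq_weightedMean hs hM hy]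
  exact hmean hx hy

theorem toNNReal_sq_mul_toNNReal_div_sq_lt_one {x y z : ℝ} (hx : 0 ≤ x) (hy : 0 ≤ y) (hz : 0 < z)
    (h : x * y < z) : (x ^ 2).toNNReal * ((y / z) ^ 2).toNNReal < 1 := by
  rw [← Real.toNNReal_mul (sq_nonneg x), ← mul_pow, Real.toNNReal_lt_one, ← mul_div_assoc]
  exact pow_lt_one₀ (by positivity) ((div_lt_one hz).2 h) two_ne_zero

theorem stmt6_general (d n : ℕ)
    (s : Fin d → ℝ) (hs : ∀ i, 0 < s i)
    (lam : Fin n → ℝ) (hlam : ∀ i, 0 ≤ lam i)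
    (a : Fin n → ℝ) (ha : ∃ i, a i ≠ 0)
    (σ : ℝ)
    (M : ℝ) (hM : M = σ ^ 2 + ∑ i, s i)
    (ha0 : ∀ i, lam i = 0 → a i = 0)
    (smax smin : ℝ)
    (hsmax : IsGreatest (Set.range s) smax) (hsmin : IsLeast (Set.range s) smin)
    (lmax lmin : ℝ)
    (hlmax : IsGreatest {x | ∃ i, lam i = x ∧ x ≠ 0} lmax)
    (hlmin : IsLeast {x | ∃ i, lam i = x ∧ x ≠ 0} lmin)
    (hgap : (smax - smin) * (lmax - lmin) < M + smin) :
    ∃! γstar : ℝ, 1 ≤ γstar ∧ h1 lam a (h2 s M γstar) + 1 = γstar := by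
  obtain ⟨i₀, hi₀⟩ := hsmin.1
  have : Nonempty (Fin d) := ⟨i₀⟩
  have hsmin_pos : 0 < smin := hi₀ ▸ hs i₀
  have hM_pos : 0 < M := hM ▸ add_pos_of_nonneg_of_pos (sq_nonneg σ)
    (sum_pos (fun i _ => hs i) univ_nonempty)
  have hs_mem : ∀ i, s i ∈ Icc smin smax := fun i => ⟨hsmin.2 ⟨i, rfl⟩, hsmax.2 ⟨i, rfl⟩⟩
  have hlam_mem : ∀ i, a i ≠ 0 → lam i ∈ Icc lmin lmax := fun i hai =>
    have hi : lam i ∈ {x | ∃ i, lam i = x ∧ x ≠ 0} := ⟨i, rfl, fun h => hai (ha0 i h)⟩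
    ⟨hlmin.2 hi, hlmax.2 hi⟩
  have hK := toNNReal_sq_mul_toNNReal_div_sq_lt_one (sub_nonneg.2 (hlmin.2 hlmax.1))
    (sub_nonneg.2 (hsmin.2 hsmax.1)) (by positivity)
    (by linarith : (lmax - lmin) * (smax - smin) < M + smin)
  have hcomp := (lipschitzOnWith_h1 hlam ha hlam_mem).comp
    ((lipschitzOnWith_h2 hM_pos hsmin_pos hs_mem).mono (Ici_subset_Ici.2 zero_le_one))
    fun γ (hγ : 1 ≤ γ) => h2_nonneg hs hM_pos (zero_le_one.trans hγ)
  refine existsUnique_fixedPoint_of_lipschitzOnWith (s := Ici 1)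
    (f := fun γ => h1 lam a (h2 s M γ) + 1) isClosed_Ici.isComplete nonempty_Ici
    (fun γ _ => mem_Ici.2 (le_add_of_nonneg_left (h1_nonneg hlam a _))) hK
    (LipschitzOnWith.of_dist_le_mul fun x hx y hy => ?_)
  rw [dist_add_right]
  exact hcomp.dist_le_mul x hx y hy

/-- Unique fixed point. Assuming `aᵢ = 0` whenever `λᵢ = 0`
and `Δ_Σ · Δ_R < M + s_min`, the map `γ ↦ h₁(h₂(γ)) + 1` has exactly one fixed
point on `[1, ∞)`. -/
theorem stmt6 (d n : ℕ) (hd : 0 < d) (hn : 0 < n)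
    (s : Fin d → ℝ) (hs : ∀ i, 0 < s i)
    (lam : Fin n → ℝ) (hlam : ∀ i, 0 ≤ lam i)
    (a : Fin n → ℝ) (ha : ∃ i, a i ≠ 0)
    (σ : ℝ) (hσ : 0 ≤ σ)
    (M : ℝ) (hM : M = σ ^ 2 + ∑ i, s i)
    (ha0 : ∀ i, lam i = 0 → a i = 0)
    (smax smin : ℝ)
    (hsmax : IsGreatest (Set.range s) smax) (hsmin : IsLeast (Set.range s) smin)
    (lmax lmin : ℝ)
    (hlmax : IsGreatest {x | ∃ i, lam i = x ∧ x ≠ 0} lmax)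
    (hlmin : IsLeast {x | ∃ i, lam i = x ∧ x ≠ 0} lmin)
    (hgap : (smax - smin) * (lmax - lmin) < M + smin) :
    ∃! γstar : ℝ, 1 ≤ γstar ∧ h1 lam a (h2 s M γstar) + 1 = γstar :=
  stmt6_general d n s hs lam hlam a ha σ M hM ha0 smax smin hsmax hsmin lmax lmin hlmax hlmin hgap
end
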